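/- Suppose the matrix Riccati differential equation ρP = Ṗ + AᵀP + PA − (BᵀP + DᵀKC)ᵀΥ⁻¹(BᵀP + DᵀKC) + CᵀKC, P(T) = 0 (with Υ = R + DᵀKD ≻ 0 and K a given continuous matrix function) admits a solution P on [0,T], and the equation for K with terminal value 0 and nonnegative weight admits a solution K ⪰ 0 on [0,T]. Then Π := P − K solves the Π-Riccati equation ρΠ = Π̇ + AᵀΠ + ΠA − ΠBΥ⁻¹BᵀΠ − ΠBΥ⁻¹(BᵀK+DᵀKC) − (BᵀK+DᵀKC)ᵀΥ⁻¹BᵀΠ − Q₀, Π(T) = 0, where Q₀ is the weight in the K-equation; in particular the Π-equation is solvable whenever the P- and K-equations are. -/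

import Mathlib

open Matrix

section Riccati

variable {α ι κ : Type*} [CommRing α] [Fintype κ]

theorem Matrix.transpose_add_mul_mul_add (X G : Matrix κ ι α) (W : Matrix κ κ α) :
    (X + G)ᵀ * W * (X + G) = Xᵀ * W * X + Xᵀ * W * G + Gᵀ * W * X + Gᵀ * W * G := by
  simp only [transpose_add, Matrix.add_mul, Matrix.mul_add]
  abel

variable [Fintype ι]

theorem Matrix.riccati_sub {ρ : α} {A C Q₀ K K' P P' : Matrix ι ι α} {B D : Matrix ι κ α}
    {W : Matrix κ κ α} (hP : Pᵀ = P) (hK : Kᵀ = K)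
    (hKeq : ρ • K = K' + Aᵀ * K + K * A
        - (Bᵀ * K + Dᵀ * K * C)ᵀ * W * (Bᵀ * K + Dᵀ * K * C) + Cᵀ * K * C + Q₀)
    (hPeq : ρ • P = P' + Aᵀ * P + P * A
        - (Bᵀ * P + Dᵀ * K * C)ᵀ * W * (Bᵀ * P + Dᵀ * K * C) + Cᵀ * K * C) :
    ρ • (P - K) = (P' - K') + Aᵀ * (P - K) + (P - K) * A
        - (P - K) * B * W * Bᵀ * (P - K)
        - (P - K) * B * W * (Bᵀ * K + Dᵀ * K * C)
        - (Bᵀ * K + Dᵀ * K * C)ᵀ * W * Bᵀ * (P - K)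
        - Q₀ := by
  have hsplit : Bᵀ * P + Dᵀ * K * C = Bᵀ * (P - K) + (Bᵀ * K + Dᵀ * K * C) := by
    rw [Matrix.mul_sub]; abel
  have hdiff : (Bᵀ * (P - K))ᵀ = (P - K) * B := by
    rw [transpose_mul, transpose_sub, hP, hK, transpose_transpose]
  rw [hsplit, transpose_add_mul_mul_add, hdiff] at hPeq
  rw [smul_sub, hPeq, hKeq]
  simp only [Matrix.mul_assoc, Matrix.mul_sub, Matrix.sub_mul]
  abel

end Riccati

theorem stmt_15_general {n m : ℕ} (ρ T : ℝ)
    (A : Matrix (Fin n) (Fin n) ℝ) (B : Matrix (Fin n) (Fin m) ℝ)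
    (C : Matrix (Fin n) (Fin n) ℝ) (D : Matrix (Fin n) (Fin m) ℝ)
    (Q₀ : Matrix (Fin n) (Fin n) ℝ)
    (K K' P P' : ℝ → Matrix (Fin n) (Fin n) ℝ)
    (Υ : ℝ → Matrix (Fin m) (Fin m) ℝ)
    (hKsym : ∀ t, (K t).IsSymm) (hPsym : ∀ t, (P t).IsSymm)
    (hKd : ∀ t ∈ Set.Icc 0 T, ∀ a b, HasDerivAt (fun τ => K τ a b) (K' t a b) t)
    (hPd : ∀ t ∈ Set.Icc 0 T, ∀ a b, HasDerivAt (fun τ => P τ a b) (P' t a b) t)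
    (hKeq : ∀ t ∈ Set.Icc 0 T,
      ρ • K t = K' t + Aᵀ * K t + K t * A
        - (Bᵀ * K t + Dᵀ * K t * C)ᵀ * (Υ t)⁻¹ * (Bᵀ * K t + Dᵀ * K t * C)
        + Cᵀ * K t * C + Q₀)
    (hKT : K T = 0)
    (hPeq : ∀ t ∈ Set.Icc 0 T,
      ρ • P t = P' t + Aᵀ * P t + P t * A
        - (Bᵀ * P t + Dᵀ * K t * C)ᵀ * (Υ t)⁻¹ * (Bᵀ * P t + Dᵀ * K t * C)
        + Cᵀ * K t * C)
    (hPT : P T = 0) :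
    (∀ t ∈ Set.Icc 0 T, ∀ a b,
        HasDerivAt (fun τ => P τ a b - K τ a b) (P' t a b - K' t a b) t) ∧
    (∀ t ∈ Set.Icc 0 T,
      ρ • (P t - K t) = (P' t - K' t) + Aᵀ * (P t - K t) + (P t - K t) * A
        - (P t - K t) * B * (Υ t)⁻¹ * Bᵀ * (P t - K t)
        - (P t - K t) * B * (Υ t)⁻¹ * (Bᵀ * K t + Dᵀ * K t * C)
        - (Bᵀ * K t + Dᵀ * K t * C)ᵀ * (Υ t)⁻¹ * Bᵀ * (P t - K t)
        - Q₀) ∧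
    P T - K T = 0 :=
  ⟨fun t ht a b => (hPd t ht a b).sub (hKd t ht a b),
    fun t ht => riccati_sub (hPsym t) (hKsym t) (hKeq t ht) (hPeq t ht),
    by rw [hPT, hKT, sub_zero]⟩

theorem stmt_15 {n m : ℕ} (ρ T : ℝ) (hT : 0 < T)
    (A : Matrix (Fin n) (Fin n) ℝ) (B : Matrix (Fin n) (Fin m) ℝ)
    (C : Matrix (Fin n) (Fin n) ℝ) (D : Matrix (Fin n) (Fin m) ℝ)
    (Q₀ : Matrix (Fin n) (Fin n) ℝ) (R : Matrix (Fin m) (Fin m) ℝ)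
    (hQ₀ : Q₀.PosSemidef) (hR : R.PosDef)
    (K K' P P' : ℝ → Matrix (Fin n) (Fin n) ℝ)
    (Υ : ℝ → Matrix (Fin m) (Fin m) ℝ)
    (hΥ : ∀ t, Υ t = R + Dᵀ * K t * D)
    (hΥpd : ∀ t ∈ Set.Icc 0 T, (Υ t).PosDef)
    (hKsym : ∀ t, (K t).IsSymm) (hPsym : ∀ t, (P t).IsSymm)
    (hKd : ∀ t ∈ Set.Icc 0 T, ∀ a b, HasDerivAt (fun τ => K τ a b) (K' t a b) t)
    (hPd : ∀ t ∈ Set.Icc 0 T, ∀ a b, HasDerivAt (fun τ => P τ a b) (P' t a b) t)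
    (hKpsd : ∀ t ∈ Set.Icc 0 T, (K t).PosSemidef)
    (hKeq : ∀ t ∈ Set.Icc 0 T,
      ρ • K t = K' t + Aᵀ * K t + K t * A
        - (Bᵀ * K t + Dᵀ * K t * C)ᵀ * (Υ t)⁻¹ * (Bᵀ * K t + Dᵀ * K t * C)
        + Cᵀ * K t * C + Q₀)
    (hKT : K T = 0)
    (hPeq : ∀ t ∈ Set.Icc 0 T,
      ρ • P t = P' t + Aᵀ * P t + P t * A
        - (Bᵀ * P t + Dᵀ * K t * C)ᵀ * (Υ t)⁻¹ * (Bᵀ * P t + Dᵀ * K t * C)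
        + Cᵀ * K t * C)
    (hPT : P T = 0) :
    (∀ t ∈ Set.Icc 0 T, ∀ a b,
        HasDerivAt (fun τ => P τ a b - K τ a b) (P' t a b - K' t a b) t) ∧
    (∀ t ∈ Set.Icc 0 T,
      ρ • (P t - K t) = (P' t - K' t) + Aᵀ * (P t - K t) + (P t - K t) * A
        - (P t - K t) * B * (Υ t)⁻¹ * Bᵀ * (P t - K t)
        - (P t - K t) * B * (Υ t)⁻¹ * (Bᵀ * K t + Dᵀ * K t * C)
        - (Bᵀ * K t + Dᵀ * K t * C)ᵀ * (Υ t)⁻¹ * Bᵀ * (P t - K t)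
        - Q₀) ∧
    P T - K T = 0 :=
  stmt_15_general ρ T A B C D Q₀ K K' P P' Υ hKsym hPsym hKd hPd hKeq hKT hPeq hPT
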